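/- Let n₁, n₂ be natural numbers, λ_s, λ_d ∈ ℂ and r ∈ ℝ with 0 < r < |λ_s|, and set λ̂ = λ_s + λ_d·ε ∈ DualNumber ℂ, with inverse μ̂ = λ_s⁻¹ − (λ_d/λ_s²)·ε. Let J, H be n₂×n₂ complex matrices with J upper triangular and |J i i| ≤ r for every diagonal index i. Let P̂ be an invertible (n₁+n₂)×(n₁+n₂) matrix over DualNumber ℂ and define Â = P̂ · fromBlocks(λ̂·I_{n₁}, 0, 0, J + H·ε) · P̂⁻¹. Let η̂ : Fin n₁ ⊕ Fin n₂ → DualNumber ℂ, let v̂⁰ = P̂.mulVec η̂, let η̂' agree with η̂ on the first summand and be 0 on the second, and let û = P̂.mulVec η̂'. Then there exist C > 0 and d ∈ ℕ such that for every k ≥ 1: ‖(μ̂^k • ((Â^k).mulVec v̂⁰)) − û‖_{2^R} ≤ C · k^d · (r/|λ_s|)^k. (This is the core convergence estimate for the power method applied to a non-Hermitian dual complex matrix with a strict dominant dual complex eigenvalue λ̂.) -/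
import Mathlib
set_option maxHeartbeats 1000000
set_option synthInstance.maxHeartbeats 400000

/-- The dual complex matrix with standard part `A` and dual part `B`. -/
noncomputable def dmC {ι : Type*} (A B : Matrix ι ι ℂ) : Matrix ι ι (DualNumber ℂ) :=
  A.map TrivSqZeroExt.inl + B.map TrivSqZeroExt.inr

/-- The `2^R`-norm of a dual complex vector:
`sqrt(‖standard part‖₂² + ‖dual part‖₂²)`. -/
noncomputable def norm2RC {ι : Type*} [Fintype ι] (x : ι → DualNumber ℂ) : ℝ :=
  Real.sqrt (∑ i, ‖(x i).fst‖ ^ 2 + ∑ i, ‖(x i).snd‖ ^ 2)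

section Aux

lemma tri_pow {n : ℕ} {J : Matrix (Fin n) (Fin n) ℂ}
    (htri : ∀ i j : Fin n, (j:ℕ) < (i:ℕ) → J i j = 0) (k : ℕ) :
    ∀ i j : Fin n, (j:ℕ) < (i:ℕ) → (J ^ k) i j = 0 := by
  induction k with
  | zero =>
    intro i j hij
    have : i ≠ j := by intro h; subst h; exact lt_irrefl _ hij
    simp [Matrix.one_apply, this]
  | succ k ih =>
    intro i j hij
    rw [pow_succ, Matrix.mul_apply]
    apply Finset.sum_eq_zero
    intro t _
    rcases lt_or_ge (t:ℕ) (i:ℕ) with h | h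
    · rw [ih i t h, zero_mul]
    · rw [htri t j (lt_of_lt_of_le hij h), mul_zero]

lemma aux_pow (g k : ℕ) : ((k:ℝ)+1)^g + g*((k:ℝ)+1)^(g-1) ≤ ((k:ℝ)+2)^g := by
  induction g with
  | zero => simp
  | succ g ih =>
    have hk1 : (0:ℝ) ≤ (k:ℝ)+1 := by positivity
    have h1 : ((k:ℝ)+1)^g ≤ ((k:ℝ)+2)^g := by
      apply pow_le_pow_left₀ hk1; linarith
    have h2 : (g:ℝ)*((k:ℝ)+1)^(g-1) * ((k:ℝ)+1) = (g:ℝ)*((k:ℝ)+1)^g := by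
      rcases Nat.eq_zero_or_pos g with h | h
      · subst h; simp
      · rw [mul_assoc, ← pow_succ, Nat.sub_add_cancel h]
    have h3 : (0:ℝ) ≤ (g:ℝ)*((k:ℝ)+1)^(g-1) := by positivity
    have e1 : ((k:ℝ)+1)^(g+1) = ((k:ℝ)+1)^g*((k:ℝ)+1) := pow_succ _ _
    have key : (((k:ℝ)+1)^g + g*((k:ℝ)+1)^(g-1)) * ((k:ℝ)+2) ≤ ((k:ℝ)+2)^(g+1) := by
      rw [pow_succ]
      apply mul_le_mul_of_nonneg_right ih (by positivity)
    have expand : ((k:ℝ)+1)^(g+1) + (g+1:ℕ)*((k:ℝ)+1)^((g+1)-1)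
        ≤ (((k:ℝ)+1)^g + g*((k:ℝ)+1)^(g-1)) * ((k:ℝ)+2) := by
      push_cast
      nlinarith [h2, h3, e1, pow_nonneg hk1 g]
    exact expand.trans key

lemma tri_pow_entry_bound {n : ℕ} {J : Matrix (Fin n) (Fin n) ℂ} {r M : ℝ}
    (hr : 0 < r) (hrM : r ≤ M)
    (htri : ∀ i j : Fin n, (j:ℕ) < (i:ℕ) → J i j = 0)
    (hdiag : ∀ i, ‖J i i‖ ≤ r)
    (hM : ∀ i j, ‖J i j‖ ≤ M) :
    ∀ k : ℕ, ∀ i j : Fin n,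
      ‖(J ^ k) i j‖ ≤ ((k:ℝ)+1)^((j:ℕ)-(i:ℕ)) * (M/r)^((j:ℕ)-(i:ℕ)) * r^k := by
  have hq1 : (1:ℝ) ≤ M/r := (one_le_div hr).2 hrM
  have hq0 : (0:ℝ) ≤ M/r := le_trans zero_le_one hq1
  intro k
  induction k with
  | zero =>
    intro i j
    rcases eq_or_ne i j with h | h
    · subst h; simp [Matrix.one_apply]
    · rw [pow_zero, Matrix.one_apply_ne h, norm_zero]
      have := pow_nonneg hq0 ((j:ℕ)-(i:ℕ))
      have h2 : (0:ℝ) ≤ ((0:ℕ):ℝ)+1 := by norm_num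
      have := pow_nonneg h2 ((j:ℕ)-(i:ℕ))
      positivity
  | succ k ih =>
    intro i j
    rcases lt_or_ge (j:ℕ) (i:ℕ) with hij | hij
    · rw [tri_pow htri (k+1) i j hij, norm_zero]
      positivity
    set g := (j:ℕ) - (i:ℕ) with hgdef
    have hvanish : ∀ t ∈ (Finset.univ : Finset (Fin n)),
        t ∉ insert j (Finset.Ico i j) → (J^k) i t * J t j = 0 := by
      intro t _ ht
      simp only [Finset.mem_insert, Finset.mem_Ico, not_or, not_and_or, not_le, not_lt] at ht
      obtain ⟨htj, h2⟩ := ht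
      rcases h2 with h | h
      · rw [tri_pow htri k i t (by exact_mod_cast h), zero_mul]
      · have : (j:ℕ) < (t:ℕ) := by
          have h' : (j:ℕ) ≤ (t:ℕ) := h
          rcases lt_or_eq_of_le h' with h'' | h''
          · exact h''
          · exact absurd (Fin.ext h''.symm) htj
        rw [htri t j this, mul_zero]
    have e : ∑ t, (J^k) i t * J t j
        = (J^k) i j * J j j + ∑ t ∈ Finset.Ico i j, (J^k) i t * J t j := by
      rw [← Finset.sum_subset (Finset.subset_univ _) hvanish,
        Finset.sum_insert (by simp)]
    have h1 : ‖(J^k) i j * J j j‖ ≤ ((k:ℝ)+1)^g * (M/r)^g * r^k * r := by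
      calc ‖(J^k) i j * J j j‖ ≤ ‖(J^k) i j‖ * ‖J j j‖ := norm_mul_le _ _
        _ ≤ (((k:ℝ)+1)^g * (M/r)^g * r^k) * r := by
            apply mul_le_mul (ih i j) (hdiag j) (norm_nonneg _)
            positivity
    have hIco : ∀ t ∈ Finset.Ico i j, ‖(J^k) i t * J t j‖
        ≤ ((k:ℝ)+1)^(g-1) * ((M/r)^g * r^(k+1)) := by
      intro t ht
      rw [Finset.mem_Ico] at ht
      have hti : (i:ℕ) ≤ (t:ℕ) := ht.1
      have htj : (t:ℕ) < (j:ℕ) := ht.2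
      have hg1 : 1 ≤ g := by omega
      have hg' : (t:ℕ) - (i:ℕ) ≤ g - 1 := by omega
      have hk1 : (1:ℝ) ≤ (k:ℝ)+1 := by
        have : (0:ℝ) ≤ (k:ℝ) := Nat.cast_nonneg k
        linarith
      calc ‖(J^k) i t * J t j‖ ≤ ‖(J^k) i t‖ * ‖J t j‖ := norm_mul_le _ _
        _ ≤ (((k:ℝ)+1)^((t:ℕ)-(i:ℕ)) * (M/r)^((t:ℕ)-(i:ℕ)) * r^k) * M := by
            apply mul_le_mul (ih i t) (hM t j) (norm_nonneg _)
            positivity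
        _ ≤ (((k:ℝ)+1)^(g-1) * (M/r)^(g-1) * r^k) * ((M/r)*r) := by
            rw [div_mul_cancel₀ M (ne_of_gt hr)]
            apply mul_le_mul _ le_rfl (by linarith) (by positivity)
            apply mul_le_mul _ _ (by positivity) (by positivity)
            · apply mul_le_mul _ _ (by positivity) (by positivity)
              · exact pow_le_pow_right₀ hk1 hg'
              · exact pow_le_pow_right₀ hq1 hg'
            · exact le_rfl
        _ = ((k:ℝ)+1)^(g-1) * ((M/r)^g * r^(k+1)) := by
            have hQ : (M/r)^(g-1) * (M/r) = (M/r)^g := by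
              rw [← pow_succ, Nat.sub_add_cancel hg1]
            rw [pow_succ r k]
            linear_combination (((k:ℝ)+1)^(g-1) * r^k * r) * hQ
    have hcard : (Finset.Ico i j).card = g := by
      rw [Fin.card_Ico]
    have h2 : ‖∑ t ∈ Finset.Ico i j, (J^k) i t * J t j‖
        ≤ (g:ℝ) * (((k:ℝ)+1)^(g-1) * ((M/r)^g * r^(k+1))) := by
      calc ‖∑ t ∈ Finset.Ico i j, (J^k) i t * J t j‖
          ≤ ∑ t ∈ Finset.Ico i j, ‖(J^k) i t * J t j‖ := norm_sum_le _ _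
        _ ≤ (Finset.Ico i j).card • (((k:ℝ)+1)^(g-1) * ((M/r)^g * r^(k+1))) :=
            Finset.sum_le_card_nsmul _ _ _ hIco
        _ = (g:ℝ) * _ := by rw [hcard, nsmul_eq_mul]
    have key : ‖(J ^ (k+1)) i j‖
        ≤ (((k:ℝ)+1)^g + g*((k:ℝ)+1)^(g-1)) * ((M/r)^g * r^(k+1)) := by
      rw [pow_succ, Matrix.mul_apply, e]
      calc ‖_ + _‖ ≤ ‖(J^k) i j * J j j‖ + ‖∑ t ∈ Finset.Ico i j, (J^k) i t * J t j‖ :=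
            norm_add_le _ _
        _ ≤ (((k:ℝ)+1)^g * (M/r)^g * r^k * r) + (g:ℝ) * (((k:ℝ)+1)^(g-1) * ((M/r)^g * r^(k+1))) :=
            add_le_add h1 h2
        _ = (((k:ℝ)+1)^g + g*((k:ℝ)+1)^(g-1)) * ((M/r)^g * r^(k+1)) := by
            rw [pow_succ r k]; ring
    refine key.trans ?_
    have hcast : (((k+1:ℕ)):ℝ) + 1 = (k:ℝ)+2 := by push_cast; ring
    rw [hcast, mul_assoc]
    apply mul_le_mul_of_nonneg_right (aux_pow g k)
    positivity

lemma dmC_fst {ι : Type*} (A B : Matrix ι ι ℂ) (i j : ι) : ((dmC A B) i j).fst = A i j := by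
  simp [dmC, Matrix.add_apply, Matrix.map_apply]

lemma dmC_snd {ι : Type*} (A B : Matrix ι ι ℂ) (i j : ι) : ((dmC A B) i j).snd = B i j := by
  simp [dmC, Matrix.add_apply, Matrix.map_apply]

lemma dmC_one {ι : Type*} [Fintype ι] [DecidableEq ι] :
    dmC (1 : Matrix ι ι ℂ) 0 = 1 := by
  ext i j
  · simp [dmC_fst, Matrix.one_apply, apply_ite]
  · simp [dmC_snd, Matrix.one_apply, apply_ite]

lemma dmC_mul {ι : Type*} [Fintype ι] [DecidableEq ι] (A B C D : Matrix ι ι ℂ) :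
    dmC A B * dmC C D = dmC (A*C) (A*D + B*C) := by
  ext i j
  · rw [Matrix.mul_apply, TrivSqZeroExt.fst_sum, dmC_fst, Matrix.mul_apply]
    exact Finset.sum_congr rfl fun t _ => by
      rw [TrivSqZeroExt.fst_mul, dmC_fst, dmC_fst]
  · rw [Matrix.mul_apply, TrivSqZeroExt.snd_sum, dmC_snd, Matrix.add_apply,
      Matrix.mul_apply, Matrix.mul_apply, ← Finset.sum_add_distrib]
    exact Finset.sum_congr rfl fun t _ => by
      rw [TrivSqZeroExt.snd_mul, dmC_fst, dmC_snd, dmC_fst, dmC_snd]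
      rw [op_smul_eq_mul, smul_eq_mul]

noncomputable def Ssum {n : ℕ} (J H : Matrix (Fin n) (Fin n) ℂ) (k : ℕ) :
    Matrix (Fin n) (Fin n) ℂ :=
  ∑ a ∈ Finset.range k, J^a * H * J^(k-1-a)

lemma dmC_pow {n : ℕ} (J H : Matrix (Fin n) (Fin n) ℂ) (k : ℕ) :
    (dmC J H)^k = dmC (J^k) (Ssum J H k) := by
  induction k with
  | zero => simp [Ssum, dmC_one]
  | succ k ih =>
    rw [pow_succ', ih, dmC_mul, ← pow_succ']
    have hS : J * Ssum J H k + H * J^k = Ssum J H (k+1) := by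
      rw [Ssum, Ssum, Finset.sum_range_succ', Finset.mul_sum]
      congr 1
      · apply Finset.sum_congr rfl fun a ha => ?_
        rw [Finset.mem_range] at ha
        have h : k + 1 - 1 - (a+1) = k - 1 - a := by omega
        rw [h, ← mul_assoc, ← mul_assoc, ← pow_succ']
      · simp
    rw [hS]

lemma entry_mul_bound {n : ℕ} (A B : Matrix (Fin n) (Fin n) ℂ) {a b : ℝ}
    (ha0 : 0 ≤ a)
    (ha : ∀ i j, ‖A i j‖ ≤ a) (hb : ∀ i j, ‖B i j‖ ≤ b) :
    ∀ i j, ‖(A*B) i j‖ ≤ n * a * b := by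
  intro i j
  rw [Matrix.mul_apply]
  calc ‖∑ t, A i t * B t j‖ ≤ ∑ t, ‖A i t * B t j‖ := norm_sum_le _ _
    _ ≤ ∑ _t : Fin n, a*b := Finset.sum_le_sum fun t _ =>
        (norm_mul_le _ _).trans (mul_le_mul (ha i t) (hb t j) (norm_nonneg _) ha0)
    _ = n*a*b := by
        rw [Finset.sum_const, Finset.card_univ, Fintype.card_fin, nsmul_eq_mul]; ring

lemma fromBlocks_diag_pow {l m : Type*} [Fintype l] [Fintype m] [DecidableEq l] [DecidableEq m]
    {α : Type*} [CommRing α] (A : Matrix l l α) (D : Matrix m m α) (k : ℕ) :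
    (Matrix.fromBlocks A 0 0 D)^k = Matrix.fromBlocks (A^k) 0 0 (D^k) := by
  induction k with
  | zero => simp [Matrix.fromBlocks_one]
  | succ k ih =>
    rw [pow_succ, ih, pow_succ, pow_succ, Matrix.fromBlocks_multiply]
    simp

lemma conjPowAux {ι : Type*} [Fintype ι] [DecidableEq ι] {α : Type*} [CommRing α]
    (P Pinv F : Matrix ι ι α) (hP1 : P * Pinv = 1) (hP2 : Pinv * P = 1) (k : ℕ) :
    (P*F*Pinv)^k = P*F^k*Pinv := by
  induction k with
  | zero => rw [pow_zero, pow_zero, Matrix.mul_one, hP1]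
  | succ k ih =>
    have e : P * F ^ k * Pinv * (P * F * Pinv) = P * F ^ k * (Pinv * P) * (F * Pinv) := by
      simp only [Matrix.mul_assoc]
    rw [pow_succ, ih, e, hP2, Matrix.mul_one, pow_succ]
    simp only [Matrix.mul_assoc]

lemma mulVec_fst {ι : Type*} [Fintype ι] (P : Matrix ι ι (DualNumber ℂ))
    (u : ι → DualNumber ℂ) (p : ι) :
    ((P.mulVec u) p).fst = ∑ q, (P p q).fst * (u q).fst := by
  rw [Matrix.mulVec, dotProduct, TrivSqZeroExt.fst_sum]
  exact Finset.sum_congr rfl fun q _ => TrivSqZeroExt.fst_mul _ _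

lemma mulVec_snd {ι : Type*} [Fintype ι] (P : Matrix ι ι (DualNumber ℂ))
    (u : ι → DualNumber ℂ) (p : ι) :
    ((P.mulVec u) p).snd = ∑ q, ((P p q).fst * (u q).snd + (P p q).snd * (u q).fst) := by
  rw [Matrix.mulVec, dotProduct, TrivSqZeroExt.snd_sum]
  refine Finset.sum_congr rfl fun q _ => ?_
  rw [TrivSqZeroExt.snd_mul, op_smul_eq_mul, smul_eq_mul]

lemma dn_snd_mul (x y : DualNumber ℂ) : (x * y).snd = x.fst * y.snd + y.fst * x.snd := by
  rw [TrivSqZeroExt.snd_mul, op_smul_eq_mul, smul_eq_mul]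
  ring

lemma smul_mulVec_dn {ι : Type*} [Fintype ι] (c : DualNumber ℂ)
    (P : Matrix ι ι (DualNumber ℂ)) (v : ι → DualNumber ℂ) :
    c • (P.mulVec v) = P.mulVec (c • v) := by
  funext p
  rw [Pi.smul_apply, smul_eq_mul, Matrix.mulVec, Matrix.mulVec, dotProduct,
    dotProduct, Finset.mul_sum]
  exact Finset.sum_congr rfl fun q _ => by rw [Pi.smul_apply, smul_eq_mul]; ring

lemma norm2RC_le_of_bound {ι : Type*} [Fintype ι] (x : ι → DualNumber ℂ) (B : ℝ) (hB : 0 ≤ B)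
    (h1 : ∀ i, ‖(x i).fst‖ ≤ B) (h2 : ∀ i, ‖(x i).snd‖ ≤ B) :
    norm2RC x ≤ Real.sqrt (2 * Fintype.card ι) * B := by
  rw [norm2RC]
  have key : ∑ i, ‖(x i).fst‖^2 + ∑ i, ‖(x i).snd‖^2
      ≤ (2 * (Fintype.card ι)) * B^2 := by
    have e1 : ∑ i, ‖(x i).fst‖^2 ≤ (Fintype.card ι : ℝ) * B^2 := by
      calc ∑ i, ‖(x i).fst‖^2 ≤ ∑ _i : ι, B^2 := Finset.sum_le_sum fun i _ =>
            pow_le_pow_left₀ (norm_nonneg _) (h1 i) 2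
        _ = (Fintype.card ι : ℝ) * B^2 := by
            rw [Finset.sum_const, Finset.card_univ, nsmul_eq_mul]
    have e2 : ∑ i, ‖(x i).snd‖^2 ≤ (Fintype.card ι : ℝ) * B^2 := by
      calc ∑ i, ‖(x i).snd‖^2 ≤ ∑ _i : ι, B^2 := Finset.sum_le_sum fun i _ =>
            pow_le_pow_left₀ (norm_nonneg _) (h2 i) 2
        _ = (Fintype.card ι : ℝ) * B^2 := by
            rw [Finset.sum_const, Finset.card_univ, nsmul_eq_mul]
    linarith
  calc Real.sqrt (∑ i, ‖(x i).fst‖^2 + ∑ i, ‖(x i).snd‖^2)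
      ≤ Real.sqrt ((2 * (Fintype.card ι)) * B^2) := Real.sqrt_le_sqrt key
    _ = Real.sqrt (2 * Fintype.card ι) * B := by
        rw [Real.sqrt_mul (by positivity), Real.sqrt_sq hB]

end Aux
section Aux2

lemma key_identity {n₁ n₂ : ℕ} (lams lamd : ℂ) (hlamsne : lams ≠ 0)
    (J H : Matrix (Fin n₂) (Fin n₂) ℂ)
    (P Pinv : Matrix (Fin n₁ ⊕ Fin n₂) (Fin n₁ ⊕ Fin n₂) (DualNumber ℂ))
    (hP1 : P * Pinv = 1) (hP2 : Pinv * P = 1)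
    (η : Fin n₁ ⊕ Fin n₂ → DualNumber ℂ) (k : ℕ) :
    (TrivSqZeroExt.inl lams⁻¹ + TrivSqZeroExt.inr (-(lamd / lams ^ 2)) : DualNumber ℂ) ^ k •
        ((P * Matrix.fromBlocks
            ((TrivSqZeroExt.inl lams + TrivSqZeroExt.inr lamd : DualNumber ℂ) •
              (1 : Matrix (Fin n₁) (Fin n₁) (DualNumber ℂ))) 0 0 (dmC J H) * Pinv) ^ k).mulVec
          (P.mulVec η) -
      P.mulVec (Sum.elim (fun i => η (Sum.inl i)) fun _ => 0)
    = P.mulVec (Sum.elim 0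
        ((TrivSqZeroExt.inl lams⁻¹ + TrivSqZeroExt.inr (-(lamd / lams ^ 2)) : DualNumber ℂ) ^ k •
          ((dmC J H) ^ k).mulVec (fun t => η (Sum.inr t)))) := by
  set lam : DualNumber ℂ := TrivSqZeroExt.inl lams + TrivSqZeroExt.inr lamd with hlam
  set mu : DualNumber ℂ :=
    TrivSqZeroExt.inl lams⁻¹ + TrivSqZeroExt.inr (-(lamd / lams ^ 2)) with hmu
  set N : Matrix (Fin n₂) (Fin n₂) (DualNumber ℂ) := dmC J H with hN
  set F := Matrix.fromBlocks (lam • (1 : Matrix (Fin n₁) (Fin n₁) (DualNumber ℂ))) 0 0 N with hF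
  have hmufst : mu.fst = lams⁻¹ := by simp [hmu]
  have hmusnd : mu.snd = -(lamd / lams ^ 2) := by simp [hmu]
  have hlamfst : lam.fst = lams := by simp [hlam]
  have hlamsnd : lam.snd = lamd := by simp [hlam]
  have hmulam : mu * lam = 1 := by
    apply TrivSqZeroExt.ext
    · rw [TrivSqZeroExt.fst_mul, hmufst, hlamfst, TrivSqZeroExt.fst_one]
      field_simp
    · rw [TrivSqZeroExt.snd_mul, hmufst, hmusnd, hlamfst, hlamsnd, TrivSqZeroExt.snd_one,
        op_smul_eq_mul, smul_eq_mul]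
      field_simp
      ring
  rw [conjPowAux P Pinv F hP1 hP2 k, Matrix.mulVec_mulVec]
  have e1 : P * F ^ k * Pinv * P = P * F ^ k := by
    rw [Matrix.mul_assoc (P * F ^ k) Pinv P, hP2, Matrix.mul_one]
  rw [e1, ← Matrix.mulVec_mulVec, smul_mulVec_dn, ← Matrix.mulVec_sub]
  refine congrArg P.mulVec ?_
  have hFk : F ^ k = Matrix.fromBlocks ((lam ^ k) • 1) 0 0 (N ^ k) := by
    rw [hF, fromBlocks_diag_pow, smul_pow, one_pow]
  rw [hFk, Matrix.fromBlocks_mulVec]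
  funext p
  cases p with
  | inl i =>
    simp only [Pi.sub_apply, Pi.smul_apply, Sum.elim_inl, Matrix.zero_mulVec, add_zero,
      zero_add, Matrix.smul_mulVec, Matrix.one_mulVec, Pi.zero_apply,
      Function.comp_apply]
    rw [smul_smul, ← mul_pow, hmulam, one_pow, one_smul]
    simp
  | inr t =>
    simp only [Pi.sub_apply, Pi.smul_apply, Sum.elim_inr, Matrix.zero_mulVec, zero_add,
      add_zero, Pi.zero_apply, Function.comp_apply]
    simp only [sub_zero, smul_eq_mul]
    rfl

lemma Jpow_unif {n₂ : ℕ} (J : Matrix (Fin n₂) (Fin n₂) ℂ) (r : ℝ) (hr : 0 < r)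
    (hJtri : ∀ i j : Fin n₂, (j : ℕ) < (i : ℕ) → J i j = 0)
    (hJdiag : ∀ i, ‖J i i‖ ≤ r) :
    ∃ C : ℝ, 1 ≤ C ∧ ∀ k : ℕ, ∀ i j, ‖(J^k) i j‖ ≤ C * (((k:ℝ)+1)^n₂ * r^k) := by
  set M : ℝ := r + ∑ p : Fin n₂ × Fin n₂, ‖J p.1 p.2‖ with hMdef
  have hsumJ : (0:ℝ) ≤ ∑ p : Fin n₂ × Fin n₂, ‖J p.1 p.2‖ :=
    Finset.sum_nonneg fun _ _ => norm_nonneg _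
  have hrM : r ≤ M := by rw [hMdef]; linarith
  have hM : ∀ i j, ‖J i j‖ ≤ M := by
    intro i j
    have h1 : ‖J i j‖ ≤ ∑ p : Fin n₂ × Fin n₂, ‖J p.1 p.2‖ :=
      Finset.single_le_sum (f := fun p : Fin n₂ × Fin n₂ => ‖J p.1 p.2‖)
        (fun _ _ => norm_nonneg _) (Finset.mem_univ (i, j))
    rw [hMdef]; linarith
  have hq1 : (1:ℝ) ≤ M/r := (one_le_div hr).2 hrM
  refine ⟨(M/r)^n₂, one_le_pow₀ hq1, ?_⟩
  intro k i j
  refine (tri_pow_entry_bound hr hrM hJtri hJdiag hM k i j).trans ?_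
  have hk1 : (1:ℝ) ≤ (k:ℝ)+1 := by
    have : (0:ℝ) ≤ (k:ℝ) := Nat.cast_nonneg k
    linarith
  have hgn : (j:ℕ) - (i:ℕ) ≤ n₂ := by
    have := j.isLt; omega
  calc ((k:ℝ)+1)^((j:ℕ)-(i:ℕ)) * (M/r)^((j:ℕ)-(i:ℕ)) * r^k
      ≤ ((k:ℝ)+1)^n₂ * (M/r)^n₂ * r^k := by
        have e1 : ((k:ℝ)+1)^((j:ℕ)-(i:ℕ)) ≤ ((k:ℝ)+1)^n₂ := pow_le_pow_right₀ hk1 hgn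
        have e2 : (M/r)^((j:ℕ)-(i:ℕ)) ≤ (M/r)^n₂ := pow_le_pow_right₀ hq1 hgn
        have e3 : (0:ℝ) ≤ r^k := pow_nonneg hr.le k
        apply mul_le_mul _ le_rfl e3 (by positivity)
        apply mul_le_mul e1 e2 (by positivity) (by positivity)
    _ = (M/r)^n₂ * (((k:ℝ)+1)^n₂ * r^k) := by ring

lemma Ssum_bound {n₂ : ℕ} (J H : Matrix (Fin n₂) (Fin n₂) ℂ) (r : ℝ) (hr : 0 < r)
    (Q : ℝ) (hQ1 : 1 ≤ Q)
    (hE : ∀ k : ℕ, ∀ i j, ‖(J^k) i j‖ ≤ Q * (((k:ℝ)+1)^n₂ * r^k)) :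
    ∃ C : ℝ, 0 ≤ C ∧ ∀ k : ℕ, 1 ≤ k → ∀ i j,
      ‖Ssum J H k i j‖ ≤ C * ((k:ℝ)^(2*n₂+1) * r^k) := by
  have hQ0 : (0:ℝ) < Q := lt_of_lt_of_le one_pos hQ1
  set MH : ℝ := 1 + ∑ p : Fin n₂ × Fin n₂, ‖H p.1 p.2‖ with hMHdef
  have hMH1 : (1:ℝ) ≤ MH := by
    rw [hMHdef]
    have : (0:ℝ) ≤ ∑ p : Fin n₂ × Fin n₂, ‖H p.1 p.2‖ :=
      Finset.sum_nonneg fun _ _ => norm_nonneg _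
    linarith
  have hMH0 : (0:ℝ) < MH := lt_of_lt_of_le one_pos hMH1
  have hMH : ∀ i j, ‖H i j‖ ≤ MH := by
    intro i j
    have h1 : ‖H i j‖ ≤ ∑ p : Fin n₂ × Fin n₂, ‖H p.1 p.2‖ :=
      Finset.single_le_sum (f := fun p : Fin n₂ × Fin n₂ => ‖H p.1 p.2‖)
        (fun _ _ => norm_nonneg _) (Finset.mem_univ (i, j))
    rw [hMHdef]; linarith
  refine ⟨(n₂:ℝ)^2 * Q^2 * MH / r, by positivity, ?_⟩
  intro k hk i j
  have hterm : ∀ a ∈ Finset.range k, ‖(J^a * H * J^(k-1-a)) i j‖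
      ≤ (n₂:ℝ)^2 * Q^2 * MH * ((k:ℝ)^(2*n₂) * r^(k-1)) := by
    intro a ha
    rw [Finset.mem_range] at ha
    have hA : ∀ i j, ‖(J^a * H) i j‖ ≤ (n₂:ℝ) * (Q * (((a:ℝ)+1)^n₂ * r^a)) * MH := by
      apply entry_mul_bound _ _ (by positivity) (hE a) hMH
    have hB : ∀ i' j', ‖((J^a * H) * J^(k-1-a)) i' j'‖
        ≤ (n₂:ℝ) * ((n₂:ℝ) * (Q * (((a:ℝ)+1)^n₂ * r^a)) * MH)
          * (Q * ((((k-1-a:ℕ):ℝ)+1)^n₂ * r^(k-1-a))) := by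
      apply entry_mul_bound _ _ (by positivity) hA (hE (k-1-a))
    refine (hB i j).trans ?_
    have ha1 : ((a:ℝ)+1) ≤ (k:ℝ) := by
      have : a + 1 ≤ k := ha
      exact_mod_cast this
    have hb1 : (((k-1-a:ℕ):ℝ)+1) ≤ (k:ℝ) := by
      have : (k-1-a) + 1 ≤ k := by omega
      exact_mod_cast this
    have hpw : r^a * r^(k-1-a) = r^(k-1) := by
      rw [← pow_add]; congr 1; omega
    calc (n₂:ℝ) * ((n₂:ℝ) * (Q * (((a:ℝ)+1)^n₂ * r^a)) * MH)
          * (Q * ((((k-1-a:ℕ):ℝ)+1)^n₂ * r^(k-1-a)))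
        = ((n₂:ℝ)^2 * Q^2 * MH)
          * ((((a:ℝ)+1)^n₂ * ((((k-1-a:ℕ):ℝ)+1))^n₂) * (r^a * r^(k-1-a))) := by ring
      _ ≤ ((n₂:ℝ)^2 * Q^2 * MH) * (((k:ℝ)^n₂ * (k:ℝ)^n₂) * r^(k-1)) := by
          rw [hpw]
          apply mul_le_mul_of_nonneg_left _ (by positivity)
          apply mul_le_mul_of_nonneg_right _ (pow_nonneg hr.le _)
          apply mul_le_mul (pow_le_pow_left₀ (by positivity) ha1 n₂)
            (pow_le_pow_left₀ (by positivity) hb1 n₂) (by positivity) (by positivity)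
      _ = (n₂:ℝ)^2 * Q^2 * MH * ((k:ℝ)^(2*n₂) * r^(k-1)) := by
          rw [← pow_add]
          have : n₂ + n₂ = 2*n₂ := by omega
          rw [this]
  have hsum : ‖Ssum J H k i j‖ ≤ ∑ a ∈ Finset.range k, ‖(J^a * H * J^(k-1-a)) i j‖ := by
    rw [Ssum, Matrix.sum_apply]
    exact norm_sum_le _ _
  have hsum2 : ∑ a ∈ Finset.range k, ‖(J^a * H * J^(k-1-a)) i j‖
      ≤ (k:ℝ) * ((n₂:ℝ)^2 * Q^2 * MH * ((k:ℝ)^(2*n₂) * r^(k-1))) := by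
    calc ∑ a ∈ Finset.range k, ‖(J^a * H * J^(k-1-a)) i j‖
        ≤ (Finset.range k).card • ((n₂:ℝ)^2 * Q^2 * MH * ((k:ℝ)^(2*n₂) * r^(k-1))) :=
          Finset.sum_le_card_nsmul _ _ _ hterm
      _ = (k:ℝ) * _ := by rw [Finset.card_range, nsmul_eq_mul]
  refine hsum.trans (hsum2.trans ?_)
  apply le_of_eq
  have hrk : r^k = r^(k-1) * r := by
    rw [← pow_succ]; congr 1; omega
  have hkk : (k:ℝ)^(2*n₂+1) = (k:ℝ)^(2*n₂) * (k:ℝ) := pow_succ _ _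
  rw [hkk, hrk]
  field_simp

end Aux2
section Aux3

lemma y_bound {n₂ : ℕ} (J H : Matrix (Fin n₂) (Fin n₂) ℂ) (r : ℝ) (hr : 0 < r)
    (hJtri : ∀ i j : Fin n₂, (j : ℕ) < (i : ℕ) → J i j = 0)
    (hJdiag : ∀ i, ‖J i i‖ ≤ r)
    (η₂ : Fin n₂ → DualNumber ℂ) :
    ∃ C : ℝ, 0 ≤ C ∧ ∀ k : ℕ, 1 ≤ k → ∀ t,
      ‖((((dmC J H)^k).mulVec η₂) t).fst‖ ≤ C * ((k:ℝ)^(2*n₂+1) * r^k) ∧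
      ‖((((dmC J H)^k).mulVec η₂) t).snd‖ ≤ C * ((k:ℝ)^(2*n₂+1) * r^k) := by
  obtain ⟨Q, hQ1, hE⟩ := Jpow_unif J r hr hJtri hJdiag
  have hQ0 : (0:ℝ) < Q := lt_of_lt_of_le one_pos hQ1
  obtain ⟨C₂, hC₂0, hSb⟩ := Ssum_bound J H r hr Q hQ1 hE
  set C₁ : ℝ := Q * 2^n₂ with hC₁def
  have hC₁0 : (0:ℝ) < C₁ := by positivity
  have hE1 : ∀ k : ℕ, 1 ≤ k → ∀ i j, ‖(J^k) i j‖ ≤ C₁ * ((k:ℝ)^n₂ * r^k) := by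
    intro k hk i j
    refine (hE k i j).trans ?_
    have hk1 : (1:ℝ) ≤ (k:ℝ) := by exact_mod_cast hk
    have e1 : ((k:ℝ)+1)^n₂ ≤ (2*(k:ℝ))^n₂ := by
      apply pow_le_pow_left₀ (by linarith) (by linarith)
    have e2 : (2*(k:ℝ))^n₂ = 2^n₂ * (k:ℝ)^n₂ := mul_pow 2 _ n₂
    have e3 : (0:ℝ) ≤ r^k := pow_nonneg hr.le k
    calc Q * (((k:ℝ)+1)^n₂ * r^k) ≤ Q * ((2^n₂ * (k:ℝ)^n₂) * r^k) := by
          apply mul_le_mul_of_nonneg_left _ hQ0.le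
          apply mul_le_mul_of_nonneg_right _ e3
          rw [← e2]; exact e1
      _ = C₁ * ((k:ℝ)^n₂ * r^k) := by rw [hC₁def]; ring
  set Mη : ℝ := 1 + ∑ q : Fin n₂, (‖(η₂ q).fst‖ + ‖(η₂ q).snd‖) with hMηdef
  have hMη1 : (1:ℝ) ≤ Mη := by
    rw [hMηdef]
    have : (0:ℝ) ≤ ∑ q : Fin n₂, (‖(η₂ q).fst‖ + ‖(η₂ q).snd‖) :=
      Finset.sum_nonneg fun _ _ => by positivity
    linarith
  have hMη0 : (0:ℝ) < Mη := lt_of_lt_of_le one_pos hMη1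
  have hηb : ∀ q, ‖(η₂ q).fst‖ ≤ Mη ∧ ‖(η₂ q).snd‖ ≤ Mη := by
    intro q
    have h1 : ‖(η₂ q).fst‖ + ‖(η₂ q).snd‖ ≤ ∑ q, (‖(η₂ q).fst‖ + ‖(η₂ q).snd‖) :=
      Finset.single_le_sum (f := fun q => ‖(η₂ q).fst‖ + ‖(η₂ q).snd‖)
        (fun _ _ => by positivity) (Finset.mem_univ q)
    constructor
    · rw [hMηdef]
      have := norm_nonneg (η₂ q).snd; linarith
    · rw [hMηdef]
      have := norm_nonneg (η₂ q).fst; linarith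
  refine ⟨(n₂:ℝ) * Mη * (C₁ + C₂), by positivity, ?_⟩
  intro k hk t
  have hk1 : (1:ℝ) ≤ (k:ℝ) := by exact_mod_cast hk
  have hNk : (dmC J H)^k = dmC (J^k) (Ssum J H k) := dmC_pow J H k
  have hrk0 : (0:ℝ) ≤ r^k := pow_nonneg hr.le k
  have hX0 : (0:ℝ) ≤ (k:ℝ)^(2*n₂+1) * r^k :=
    mul_nonneg (pow_nonneg (by linarith) _) hrk0
  have hkpow : (k:ℝ)^n₂ ≤ (k:ℝ)^(2*n₂+1) := pow_le_pow_right₀ hk1 (by omega)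
  have hfb : ∀ s, ‖(((dmC J H)^k) t s).fst‖ ≤ C₁ * ((k:ℝ)^(2*n₂+1) * r^k) := by
    intro s
    rw [hNk, dmC_fst]
    refine (hE1 k hk t s).trans ?_
    apply mul_le_mul_of_nonneg_left _ hC₁0.le
    exact mul_le_mul_of_nonneg_right hkpow hrk0
  have hsb : ∀ s, ‖(((dmC J H)^k) t s).snd‖ ≤ C₂ * ((k:ℝ)^(2*n₂+1) * r^k) := by
    intro s
    rw [hNk, dmC_snd]
    exact hSb k hk t s
  constructor
  · rw [mulVec_fst]
    calc ‖∑ s, (((dmC J H)^k) t s).fst * (η₂ s).fst‖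
        ≤ ∑ s, ‖(((dmC J H)^k) t s).fst * (η₂ s).fst‖ := norm_sum_le _ _
      _ ≤ ∑ _s : Fin n₂, (C₁ * ((k:ℝ)^(2*n₂+1) * r^k)) * Mη := by
          apply Finset.sum_le_sum
          intro s _
          exact (norm_mul_le _ _).trans
            (mul_le_mul (hfb s) (hηb s).1 (norm_nonneg _) (by positivity))
      _ = (n₂:ℝ) * ((C₁ * ((k:ℝ)^(2*n₂+1) * r^k)) * Mη) := by
          rw [Finset.sum_const, Finset.card_univ, Fintype.card_fin, nsmul_eq_mul]
      _ ≤ (n₂:ℝ) * Mη * (C₁ + C₂) * ((k:ℝ)^(2*n₂+1) * r^k) := by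
          nlinarith [mul_nonneg (mul_nonneg (Nat.cast_nonneg (α := ℝ) n₂) hMη0.le)
            (mul_nonneg hC₂0 hX0)]
  · rw [mulVec_snd]
    calc ‖∑ s, ((((dmC J H)^k) t s).fst * (η₂ s).snd + (((dmC J H)^k) t s).snd * (η₂ s).fst)‖
        ≤ ∑ s, ‖(((dmC J H)^k) t s).fst * (η₂ s).snd + (((dmC J H)^k) t s).snd * (η₂ s).fst‖ :=
          norm_sum_le _ _
      _ ≤ ∑ _s : Fin n₂, ((C₁ + C₂) * ((k:ℝ)^(2*n₂+1) * r^k)) * Mη := by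
          apply Finset.sum_le_sum
          intro s _
          calc ‖(((dmC J H)^k) t s).fst * (η₂ s).snd + (((dmC J H)^k) t s).snd * (η₂ s).fst‖
              ≤ ‖(((dmC J H)^k) t s).fst‖ * ‖(η₂ s).snd‖
                + ‖(((dmC J H)^k) t s).snd‖ * ‖(η₂ s).fst‖ :=
                (norm_add_le _ _).trans (add_le_add (norm_mul_le _ _) (norm_mul_le _ _))
            _ ≤ (C₁ * ((k:ℝ)^(2*n₂+1) * r^k)) * Mη + (C₂ * ((k:ℝ)^(2*n₂+1) * r^k)) * Mη := by
                apply add_le_add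
                · exact mul_le_mul (hfb s) (hηb s).2 (norm_nonneg _) (by positivity)
                · exact mul_le_mul (hsb s) (hηb s).1 (norm_nonneg _) (by positivity)
            _ = ((C₁ + C₂) * ((k:ℝ)^(2*n₂+1) * r^k)) * Mη := by ring
      _ = (n₂:ℝ) * (((C₁ + C₂) * ((k:ℝ)^(2*n₂+1) * r^k)) * Mη) := by
          rw [Finset.sum_const, Finset.card_univ, Fintype.card_fin, nsmul_eq_mul]
      _ = (n₂:ℝ) * Mη * (C₁ + C₂) * ((k:ℝ)^(2*n₂+1) * r^k) := by ring

lemma v_bound {n₂ : ℕ} (lams lamd : ℂ) (r : ℝ) (hr : 0 < r) (hrs : r < ‖lams‖)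
    (J H : Matrix (Fin n₂) (Fin n₂) ℂ)
    (hJtri : ∀ i j : Fin n₂, (j : ℕ) < (i : ℕ) → J i j = 0)
    (hJdiag : ∀ i, ‖J i i‖ ≤ r)
    (η₂ : Fin n₂ → DualNumber ℂ) :
    ∃ C : ℝ, 0 ≤ C ∧ ∀ k : ℕ, 1 ≤ k → ∀ t,
      ‖((((TrivSqZeroExt.inl lams⁻¹ + TrivSqZeroExt.inr (-(lamd / lams ^ 2)) : DualNumber ℂ) ^ k)
          • (((dmC J H)^k).mulVec η₂)) t).fst‖
        ≤ C * ((k:ℝ)^(2*n₂+2) * (r/‖lams‖)^k) ∧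
      ‖((((TrivSqZeroExt.inl lams⁻¹ + TrivSqZeroExt.inr (-(lamd / lams ^ 2)) : DualNumber ℂ) ^ k)
          • (((dmC J H)^k).mulVec η₂)) t).snd‖
        ≤ C * ((k:ℝ)^(2*n₂+2) * (r/‖lams‖)^k) := by
  have hs : (0:ℝ) < ‖lams‖ := lt_trans hr hrs
  have hlamsne : lams ≠ 0 := by
    intro h; rw [h, norm_zero] at hs; exact lt_irrefl _ hs
  obtain ⟨C₃, hC₃0, hy⟩ := y_bound J H r hr hJtri hJdiag η₂
  set mu : DualNumber ℂ :=
    TrivSqZeroExt.inl lams⁻¹ + TrivSqZeroExt.inr (-(lamd / lams ^ 2)) with hmu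
  have hmufst : mu.fst = lams⁻¹ := by simp [hmu]
  have hmusnd : mu.snd = -(lamd / lams ^ 2) := by simp [hmu]
  have hρ0 : ∀ m : ℕ, (0:ℝ) ≤ (r/‖lams‖)^m := fun m => pow_nonneg (by positivity) m
  refine ⟨C₃ * (1 + ‖lamd‖/‖lams‖), by positivity, ?_⟩
  intro k hk t
  have hk1 : (1:ℝ) ≤ (k:ℝ) := by exact_mod_cast hk
  have hyt := hy k hk t
  have happ : (mu^k • ((dmC J H)^k).mulVec η₂) t = mu^k * ((((dmC J H)^k).mulVec η₂) t) := by
    rw [Pi.smul_apply, smul_eq_mul]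
  have hmufstk : ‖(mu^k).fst‖ = (‖lams‖⁻¹)^k := by
    rw [TrivSqZeroExt.fst_pow, hmufst, norm_pow, norm_inv]
  have hmusndk : ‖(mu^k).snd‖ = (k:ℝ) * ((‖lams‖⁻¹)^(k-1) * (‖lamd‖/‖lams‖^2)) := by
    rw [TrivSqZeroExt.snd_pow, hmufst, hmusnd, smul_eq_mul, nsmul_eq_mul, norm_mul, norm_mul,
      Complex.norm_natCast, norm_pow, norm_inv, norm_neg, norm_div, norm_pow,
      Nat.pred_eq_sub_one]
  have e : (‖lams‖⁻¹)^(k-1) * (‖lamd‖/‖lams‖^2) = (‖lamd‖/‖lams‖) * (‖lams‖⁻¹)^k := by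
    have ek : (‖lams‖⁻¹)^k = (‖lams‖⁻¹)^(k-1) * ‖lams‖⁻¹ := by
      rw [← pow_succ]; congr 1; omega
    rw [ek]
    field_simp
  have hρ : (r/‖lams‖)^k = r^k * (‖lams‖⁻¹)^k := by
    rw [div_eq_mul_inv, mul_pow, inv_pow]
  have hpmono : (k:ℝ)^(2*n₂+1) ≤ (k:ℝ)^(2*n₂+2) := pow_le_pow_right₀ hk1 (by omega)
  have hρk0 : (0:ℝ) ≤ (r/‖lams‖)^k := hρ0 k
  have hL0 : (0:ℝ) ≤ ‖lamd‖/‖lams‖ := by positivity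
  constructor
  · calc ‖((mu^k • ((dmC J H)^k).mulVec η₂) t).fst‖
        = ‖(mu^k).fst‖ * ‖((((dmC J H)^k).mulVec η₂) t).fst‖ := by
          rw [happ, TrivSqZeroExt.fst_mul, norm_mul]
      _ ≤ (‖lams‖⁻¹)^k * (C₃ * ((k:ℝ)^(2*n₂+1) * r^k)) := by
          rw [hmufstk]
          exact mul_le_mul_of_nonneg_left hyt.1 (by positivity)
      _ = C₃ * ((k:ℝ)^(2*n₂+1) * (r/‖lams‖)^k) := by rw [hρ]; ring
      _ ≤ C₃ * (1 + ‖lamd‖/‖lams‖) * ((k:ℝ)^(2*n₂+2) * (r/‖lams‖)^k) := by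
          have h1 : (k:ℝ)^(2*n₂+1) * (r/‖lams‖)^k ≤ (k:ℝ)^(2*n₂+2) * (r/‖lams‖)^k :=
            mul_le_mul_of_nonneg_right hpmono hρk0
          nlinarith [mul_le_mul_of_nonneg_left h1 hC₃0,
            mul_nonneg (mul_nonneg hC₃0 (mul_nonneg
              (pow_nonneg (by linarith : (0:ℝ) ≤ (k:ℝ)) (2*n₂+2)) hρk0)) hL0]
  · calc ‖((mu^k • ((dmC J H)^k).mulVec η₂) t).snd‖
        = ‖(mu^k).fst * ((((dmC J H)^k).mulVec η₂) t).snd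
            + ((((dmC J H)^k).mulVec η₂) t).fst * (mu^k).snd‖ := by
          rw [happ, dn_snd_mul]
      _ ≤ ‖(mu^k).fst‖ * ‖((((dmC J H)^k).mulVec η₂) t).snd‖
            + ‖((((dmC J H)^k).mulVec η₂) t).fst‖ * ‖(mu^k).snd‖ :=
          (norm_add_le _ _).trans (add_le_add (norm_mul_le _ _) (norm_mul_le _ _))
      _ ≤ (‖lams‖⁻¹)^k * (C₃ * ((k:ℝ)^(2*n₂+1) * r^k))
            + (C₃ * ((k:ℝ)^(2*n₂+1) * r^k)) * ((k:ℝ) * ((‖lamd‖/‖lams‖) * (‖lams‖⁻¹)^k)) := by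
          rw [hmufstk, hmusndk, e]
          apply add_le_add
          · exact mul_le_mul_of_nonneg_left hyt.2 (by positivity)
          · exact mul_le_mul_of_nonneg_right hyt.1 (by positivity)
      _ = C₃ * ((k:ℝ)^(2*n₂+1) * (r/‖lams‖)^k)
            + (‖lamd‖/‖lams‖) * (C₃ * ((k:ℝ)^(2*n₂+2) * (r/‖lams‖)^k)) := by
          rw [hρ]
          have hkk : (k:ℝ)^(2*n₂+2) = (k:ℝ)^(2*n₂+1) * (k:ℝ) := pow_succ _ _
          rw [hkk]
          ring
      _ ≤ C₃ * (1 + ‖lamd‖/‖lams‖) * ((k:ℝ)^(2*n₂+2) * (r/‖lams‖)^k) := by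
          have h1 : (k:ℝ)^(2*n₂+1) * (r/‖lams‖)^k ≤ (k:ℝ)^(2*n₂+2) * (r/‖lams‖)^k :=
            mul_le_mul_of_nonneg_right hpmono hρk0
          nlinarith [mul_le_mul_of_nonneg_left h1 hC₃0]

end Aux3
lemma Pvec_bound {ι : Type*} [Fintype ι] (P : Matrix ι ι (DualNumber ℂ)) :
    ∃ KP : ℝ, 0 < KP ∧ ∀ (u : ι → DualNumber ℂ) (B : ℝ), 0 ≤ B →
      (∀ q, ‖(u q).fst‖ ≤ B) → (∀ q, ‖(u q).snd‖ ≤ B) →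
      ∀ p, ‖((P.mulVec u) p).fst‖ ≤ KP * B ∧ ‖((P.mulVec u) p).snd‖ ≤ KP * B := by
  classical
  set KP : ℝ := 1 + ∑ p : ι, ∑ q : ι, (‖(P p q).fst‖ + ‖(P p q).snd‖) with hKPdef
  have hKPsum0 : (0:ℝ) ≤ ∑ p : ι, ∑ q : ι, (‖(P p q).fst‖ + ‖(P p q).snd‖) :=
    Finset.sum_nonneg fun _ _ => Finset.sum_nonneg fun _ _ => by positivity
  have hKP1 : (1:ℝ) ≤ KP := by rw [hKPdef]; linarith
  have hKP0 : (0:ℝ) < KP := lt_of_lt_of_le one_pos hKP1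
  have hrow : ∀ p, ∑ q : ι, (‖(P p q).fst‖ + ‖(P p q).snd‖) ≤ KP := by
    intro p
    have h1 : ∑ q : ι, (‖(P p q).fst‖ + ‖(P p q).snd‖)
        ≤ ∑ p' : ι, ∑ q : ι, (‖(P p' q).fst‖ + ‖(P p' q).snd‖) :=
      Finset.single_le_sum
        (f := fun p' => ∑ q : ι, (‖(P p' q).fst‖ + ‖(P p' q).snd‖))
        (fun _ _ => Finset.sum_nonneg fun _ _ => by positivity) (Finset.mem_univ p)
    rw [hKPdef]; linarith
  refine ⟨KP, hKP0, ?_⟩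
  intro u B hB0 hub1 hub2 p
  constructor
  · rw [mulVec_fst]
    calc ‖∑ q, (P p q).fst * (u q).fst‖ ≤ ∑ q, ‖(P p q).fst * (u q).fst‖ := norm_sum_le _ _
      _ ≤ ∑ q, ‖(P p q).fst‖ * B := by
          apply Finset.sum_le_sum
          intro q _
          exact (norm_mul_le _ _).trans (mul_le_mul_of_nonneg_left (hub1 q) (norm_nonneg _))
      _ = (∑ q, ‖(P p q).fst‖) * B := (Finset.sum_mul _ _ _).symm
      _ ≤ KP * B := by
          apply mul_le_mul_of_nonneg_right _ hB0
          refine le_trans ?_ (hrow p)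
          apply Finset.sum_le_sum
          intro q _
          have := norm_nonneg (P p q).snd
          linarith
  · rw [mulVec_snd]
    calc ‖∑ q, ((P p q).fst * (u q).snd + (P p q).snd * (u q).fst)‖
        ≤ ∑ q, ‖(P p q).fst * (u q).snd + (P p q).snd * (u q).fst‖ := norm_sum_le _ _
      _ ≤ ∑ q, (‖(P p q).fst‖ + ‖(P p q).snd‖) * B := by
          apply Finset.sum_le_sum
          intro q _
          calc ‖(P p q).fst * (u q).snd + (P p q).snd * (u q).fst‖
              ≤ ‖(P p q).fst‖ * ‖(u q).snd‖ + ‖(P p q).snd‖ * ‖(u q).fst‖ :=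
                (norm_add_le _ _).trans (add_le_add (norm_mul_le _ _) (norm_mul_le _ _))
            _ ≤ ‖(P p q).fst‖ * B + ‖(P p q).snd‖ * B :=
                add_le_add (mul_le_mul_of_nonneg_left (hub2 q) (norm_nonneg _))
                  (mul_le_mul_of_nonneg_left (hub1 q) (norm_nonneg _))
            _ = (‖(P p q).fst‖ + ‖(P p q).snd‖) * B := by ring
      _ = (∑ q, (‖(P p q).fst‖ + ‖(P p q).snd‖)) * B := (Finset.sum_mul _ _ _).symm
      _ ≤ KP * B := mul_le_mul_of_nonneg_right (hrow p) hB0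

theorem stmt13 {n₁ n₂ : ℕ} (lams lamd : ℂ) (r : ℝ) (hr : 0 < r) (hrs : r < ‖lams‖)
    (J H : Matrix (Fin n₂) (Fin n₂) ℂ)
    (hJtri : ∀ i j : Fin n₂, (j : ℕ) < (i : ℕ) → J i j = 0)
    (hJdiag : ∀ i, ‖J i i‖ ≤ r)
    (P Pinv : Matrix (Fin n₁ ⊕ Fin n₂) (Fin n₁ ⊕ Fin n₂) (DualNumber ℂ))
    (hP1 : P * Pinv = 1) (hP2 : Pinv * P = 1)
    (η : Fin n₁ ⊕ Fin n₂ → DualNumber ℂ) :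
    ∃ C > (0 : ℝ), ∃ d : ℕ, ∀ k : ℕ, 1 ≤ k →
      norm2RC
        (((TrivSqZeroExt.inl lams⁻¹ +
              TrivSqZeroExt.inr (-(lamd / lams ^ 2)) : DualNumber ℂ) ^ k •
            ((P * Matrix.fromBlocks
                ((TrivSqZeroExt.inl lams + TrivSqZeroExt.inr lamd : DualNumber ℂ) •
                  (1 : Matrix (Fin n₁) (Fin n₁) (DualNumber ℂ)))
                0 0 (dmC J H) * Pinv) ^ k).mulVec (P.mulVec η)) -
          P.mulVec (Sum.elim (fun i => η (Sum.inl i)) fun _ => 0)) ≤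
        C * (k : ℝ) ^ d * (r / ‖lams‖) ^ k := by
  have hs : (0:ℝ) < ‖lams‖ := lt_trans hr hrs
  have hlamsne : lams ≠ 0 := by
    intro h; rw [h, norm_zero] at hs; exact lt_irrefl _ hs
  obtain ⟨Cv, hCv0, hv⟩ := v_bound lams lamd r hr hrs J H hJtri hJdiag (fun t => η (Sum.inr t))
  obtain ⟨KP, hKP0, hPb⟩ := Pvec_bound P
  refine ⟨Real.sqrt (2 * Fintype.card (Fin n₁ ⊕ Fin n₂)) * (KP * Cv) + 1, ?_, 2*n₂+2, ?_⟩
  · have h0 : (0:ℝ) ≤ Real.sqrt (2 * Fintype.card (Fin n₁ ⊕ Fin n₂)) * (KP * Cv) :=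
      mul_nonneg (Real.sqrt_nonneg _) (mul_nonneg hKP0.le hCv0)
    linarith
  intro k hk
  rw [key_identity lams lamd hlamsne J H P Pinv hP1 hP2 η k]
  have hρk0 : (0:ℝ) ≤ (r/‖lams‖)^k := pow_nonneg (by positivity) k
  have hX0 : (0:ℝ) ≤ (k:ℝ)^(2*n₂+2) * (r/‖lams‖)^k :=
    mul_nonneg (pow_nonneg (Nat.cast_nonneg k) _) hρk0
  have hB0 : (0:ℝ) ≤ Cv * ((k:ℝ)^(2*n₂+2) * (r/‖lams‖)^k) := mul_nonneg hCv0 hX0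
  have hub1 : ∀ q, ‖((Sum.elim 0
      ((TrivSqZeroExt.inl lams⁻¹ + TrivSqZeroExt.inr (-(lamd / lams ^ 2)) : DualNumber ℂ) ^ k •
        ((dmC J H) ^ k).mulVec (fun t => η (Sum.inr t))) : (Fin n₁ ⊕ Fin n₂) → DualNumber ℂ)
        q).fst‖ ≤ Cv * ((k:ℝ)^(2*n₂+2) * (r/‖lams‖)^k) := by
    intro q
    cases q with
    | inl i =>
      simpa using hB0
    | inr t =>
      simpa using (hv k hk t).1
  have hub2 : ∀ q, ‖((Sum.elim 0
      ((TrivSqZeroExt.inl lams⁻¹ + TrivSqZeroExt.inr (-(lamd / lams ^ 2)) : DualNumber ℂ) ^ k •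
        ((dmC J H) ^ k).mulVec (fun t => η (Sum.inr t))) : (Fin n₁ ⊕ Fin n₂) → DualNumber ℂ)
        q).snd‖ ≤ Cv * ((k:ℝ)^(2*n₂+2) * (r/‖lams‖)^k) := by
    intro q
    cases q with
    | inl i =>
      simpa using hB0
    | inr t =>
      simpa using (hv k hk t).2
  have hcomp := hPb _ _ hB0 hub1 hub2
  have hfin := norm2RC_le_of_bound
    (P.mulVec (Sum.elim 0
      ((TrivSqZeroExt.inl lams⁻¹ + TrivSqZeroExt.inr (-(lamd / lams ^ 2)) : DualNumber ℂ) ^ k •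
        ((dmC J H) ^ k).mulVec (fun t => η (Sum.inr t)))))
    (KP * (Cv * ((k:ℝ)^(2*n₂+2) * (r/‖lams‖)^k)))
    (mul_nonneg hKP0.le hB0) (fun p => (hcomp p).1) (fun p => (hcomp p).2)
  refine hfin.trans ?_
  have e1 : Real.sqrt (2 * Fintype.card (Fin n₁ ⊕ Fin n₂))
        * (KP * (Cv * ((k:ℝ)^(2*n₂+2) * (r/‖lams‖)^k)))
      = (Real.sqrt (2 * Fintype.card (Fin n₁ ⊕ Fin n₂)) * (KP * Cv))
        * ((k:ℝ)^(2*n₂+2) * (r/‖lams‖)^k) := by ring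
  rw [e1]
  have e2 : (Real.sqrt (2 * Fintype.card (Fin n₁ ⊕ Fin n₂)) * (KP * Cv))
        * ((k:ℝ)^(2*n₂+2) * (r/‖lams‖)^k)
      ≤ (Real.sqrt (2 * Fintype.card (Fin n₁ ⊕ Fin n₂)) * (KP * Cv) + 1)
        * ((k:ℝ)^(2*n₂+2) * (r/‖lams‖)^k) := by
    apply mul_le_mul_of_nonneg_right _ hX0
    linarith
  refine e2.trans (le_of_eq ?_)
  ring
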